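/- arXiv:0906.4903 — 4 statements merged into one kernel-verified Lean document; each statement's English description precedes it below -/
import Mathlib

section
/- The Pontryagin dual of the discrete additive group ℚ is isomorphic as a topological group to the quotient (ℝ × Ẑ)/ℤ, where ℤ embeds diagonally via n ↦ (n, n). Explicitly, the map γ sending the class of (r, z) to the character m/n ↦ exp(2πi (r − z mod n)·(m/n)) is a well-defined isomorphism of topological groups. -/
open scoped Real

instance (n : ℕ) : TopologicalSpace (ZMod n) := ⊥

instance (n : ℕ) : DiscreteTopology (ZMod n) := ⟨rfl⟩

/-- The profinite completion `Ẑ` of `ℤ`, as the inverse limit of the `ℤ/nℤ`. -/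
def ZHat : Subring (Π n : ℕ+, ZMod n) where
  carrier := {f | ∀ (m n : ℕ+) (h : (m : ℕ) ∣ (n : ℕ)),
    ZMod.castHom h (ZMod m) (f n) = f m}
  zero_mem' := by intro m n h; exact map_zero (ZMod.castHom h (ZMod (m : ℕ)))
  one_mem' := by intro m n h; exact map_one (ZMod.castHom h (ZMod (m : ℕ)))
  add_mem' := by intro a b ha hb m n h; simp only [Pi.add_apply, map_add, ha m n h, hb m n h]
  neg_mem' := by intro a ha m n h; simp only [Pi.neg_apply, map_neg, ha m n h]
  mul_mem' := by intro a b ha hb m n h; simp only [Pi.mul_apply, map_mul, ha m n h, hb m n h]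

/-- The diagonal embedding `ℤ → ℝ × Ẑ`, `n ↦ (n, n)`. -/
def diagZ : ℤ →+ ℝ × ZHat :=
  ((Int.castRingHom ℝ).toAddMonoidHom).prod ((Int.castRingHom ZHat).toAddMonoidHom)

/-- The compact group `Y = (ℝ × Ẑ)/ℤ`, with `ℤ` embedded diagonally. -/
def Y : Type := (ℝ × ZHat) ⧸ diagZ.range

instance : AddCommGroup Y := inferInstanceAs (AddCommGroup ((ℝ × ZHat) ⧸ diagZ.range))

instance : TopologicalSpace Y :=
  inferInstanceAs (TopologicalSpace ((ℝ × ZHat) ⧸ diagZ.range))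

/-- The Pontryagin dual of the discrete group `ℚ`: all group homomorphisms
`ℚ → 𝕋`, with the topology of pointwise convergence. -/
noncomputable instance : TopologicalSpace (ℚ →+ Additive Circle) :=
  TopologicalSpace.induced (fun φ => (φ : ℚ → Additive Circle)) inferInstance

/-! The character `γ(r, z)` is evaluated at `q` through the level `n = den q`; any level
divisible by `den q` gives the same value, since `z(n) ≡ z(den q) mod den q` and `den q · q ∈ ℤ`.
This makes `(r, z) ↦ γ(r, z)` a homomorphism, and evaluating at `1` and at the `1/n` shows that
its kernel is the diagonal `ℤ`. It is onto: if `x n` is a real logarithm of `φ (1/n)`, the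
numbers `x 1 - n · x n` are integers compatible modulo `n`, hence form `z ∈ Ẑ`, and
`γ(x 1, z) = φ`. Finally `(ℝ × Ẑ)/ℤ` is compact (the image of `[0, 1] × Ẑ`) and the dual is
Hausdorff, so the continuous bijection is a homeomorphism. -/

open scoped FourierTransform

namespace Real

theorem fourierChar_eq_one_iff {x : ℝ} : 𝐞 x = 1 ↔ ∃ k : ℤ, x = k := by
  rw [fourierChar_apply', Circle.exp_eq_one]
  refine exists_congr fun k => ?_
  rw [mul_comm (k : ℝ), mul_right_inj' two_pi_pos.ne']

theorem fourierChar_eq_fourierChar_iff {x y : ℝ} : 𝐞 x = 𝐞 y ↔ ∃ k : ℤ, x - y = k := by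
  rw [← fourierChar_eq_one_iff, AddChar.map_sub_eq_div, div_eq_one]

theorem fourierChar_add_intCast (x : ℝ) (k : ℤ) : 𝐞 (x + k) = 𝐞 x := by
  rw [AddChar.map_add_eq_mul, fourierChar_eq_one_iff.2 ⟨k, rfl⟩, mul_one]

theorem fourierChar_intCast_mul (k : ℤ) (x : ℝ) : 𝐞 (k * x) = 𝐞 x ^ k := by
  rw [← zsmul_eq_mul, AddChar.map_zsmul_eq_zpow]

theorem fourierChar_surjective : Function.Surjective 𝐞 := fun c =>
  let ⟨x, hx⟩ := Circle.exp_surjective c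
  ⟨x / (2 * π), by rw [fourierChar_apply', mul_div_cancel₀ _ two_pi_pos.ne', hx]⟩

end Real

open Real

theorem fourierChar_sub_mul_rat (r : ℝ) (q : ℚ) {a b : ℤ} (h : (q.den : ℤ) ∣ a - b) :
    𝐞 ((r - a) * q) = 𝐞 ((r - b) * q) := by
  obtain ⟨k, hk⟩ := h
  have hab : (a : ℝ) - b = q.den * k := by exact_mod_cast hk
  have hden : (q.den : ℝ) ≠ 0 := by positivity
  have : (r - b) * (q : ℝ) = (r - a) * q + ((k * q.num : ℤ) : ℝ) := by
    rw [Rat.cast_def]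
    push_cast
    field_simp
    linear_combination q.num * hab
  rw [this, fourierChar_add_intCast]

theorem diagZ_apply (k : ℤ) : diagZ k = ((k : ℝ), (k : ZHat)) := rfl

namespace ZHat

theorem intCast_eq_of_dvd (z : ZHat) {m n : ℕ+} (h : (m : ℕ) ∣ n) {a : ℤ}
    (ha : (a : ZMod n) = z.1 n) : (a : ZMod m) = z.1 m := by
  rw [← z.2 m n h, ← ha, map_intCast]

theorem mem_of_forall_dvd_sub (w : ℕ+ → ℤ)
    (hw : ∀ m n : ℕ+, (m : ℕ) ∣ n → (m : ℤ) ∣ w m - w n) :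
    (fun n : ℕ+ => (w n : ZMod n)) ∈ ZHat := fun m n h => by
  rw [map_intCast, ZMod.intCast_eq_intCast_iff_dvd_sub]
  exact hw m n h

instance : CompactSpace ZHat := by
  have hclosed : IsClosed (ZHat : Set (Π n : ℕ+, ZMod n)) := by
    have : (ZHat : Set (Π n : ℕ+, ZMod n)) = ⋂ (m : ℕ+) (n : ℕ+) (h : (m : ℕ) ∣ n),
        {f | ZMod.castHom h (ZMod m) (f n) = f m} := by
      ext; simp only [Set.mem_iInter]; rfl
    rw [this]
    exact isClosed_iInter fun m => isClosed_iInter fun n => isClosed_iInter fun _ =>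
      isClosed_eq (continuous_of_discreteTopology.comp (continuous_apply n)) (continuous_apply m)
  exact isCompact_iff_compactSpace.mp hclosed.isCompact

end ZHat

noncomputable def ratChar (p : ℝ × ZHat) (q : ℚ) : Circle :=
  𝐞 ((p.1 - (p.2.1 q.pnatDen).val) * q)

theorem ratChar_eq_of_dvd (p : ℝ × ZHat) (q : ℚ) {n : ℕ+} (hn : q.den ∣ n) {a : ℤ}
    (ha : (a : ZMod n) = p.2.1 n) : ratChar p q = 𝐞 ((p.1 - a) * q) := by
  have ha' := ZHat.intCast_eq_of_dvd p.2 (m := q.pnatDen) (by rwa [Rat.coe_pnatDen]) ha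
  rw [ratChar, ← Int.cast_natCast]
  refine fourierChar_sub_mul_rat _ _ ?_
  rw [← Rat.coe_pnatDen, ← ZMod.intCast_eq_intCast_iff_dvd_sub, ha', Int.cast_natCast,
    ZMod.natCast_zmod_val]

theorem ratChar_eq_val_of_dvd (p : ℝ × ZHat) (q : ℚ) {n : ℕ+} (hn : q.den ∣ n) :
    ratChar p q = 𝐞 ((p.1 - (p.2.1 n).val) * q) := by
  rw [ratChar_eq_of_dvd p q hn (a := (p.2.1 n).val) (by simp), Int.cast_natCast]

theorem ratChar_add_left (p p' : ℝ × ZHat) (q : ℚ) :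
    ratChar (p + p') q = ratChar p q * ratChar p' q := by
  set d := q.pnatDen
  have hd : q.den ∣ d := by rw [Rat.coe_pnatDen]
  rw [ratChar_eq_val_of_dvd p q hd, ratChar_eq_val_of_dvd p' q hd,
    ratChar_eq_of_dvd (p + p') q hd (a := (p.2.1 d).val + (p'.2.1 d).val) (by simp),
    ← AddChar.map_add_eq_mul, Prod.fst_add]
  congr 1
  push_cast
  ring

theorem ratChar_add_right (p : ℝ × ZHat) (a b : ℚ) :
    ratChar p (a + b) = ratChar p a * ratChar p b := by
  set n := a.pnatDen * b.pnatDen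
  rw [ratChar_eq_val_of_dvd p a (n := n) (by simp [n]),
    ratChar_eq_val_of_dvd p b (n := n) (by simp [n]),
    ratChar_eq_val_of_dvd p (a + b) (n := n) (by simpa [n] using Rat.add_den_dvd a b),
    ← AddChar.map_add_eq_mul]
  congr 1
  push_cast
  ring

noncomputable def dualMap : ℝ × ZHat →+ (ℚ →+ Additive Circle) :=
  AddMonoidHom.mk' (fun p => AddMonoidHom.mk' (fun q => .ofMul (ratChar p q))
    (ratChar_add_right p)) fun p p' =>
    AddMonoidHom.ext fun q => congrArg Additive.ofMul (ratChar_add_left p p' q)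

theorem dualMap_apply (p : ℝ × ZHat) (q : ℚ) : dualMap p q = .ofMul (ratChar p q) := rfl

theorem ker_dualMap : dualMap.ker = diagZ.range := by
  apply le_antisymm
  · rintro ⟨r, z⟩ hp
    have htriv : ∀ q, ratChar (r, z) q = 1 := fun q => DFunLike.congr_fun hp q
    obtain ⟨k, rfl⟩ : ∃ k : ℤ, r = k := by
      have h1 := htriv 1
      rwa [ratChar_eq_of_dvd _ _ (n := 1) (a := 0) (by simp) (Subsingleton.elim (α := ZMod 1) _ _),
        Int.cast_zero, sub_zero, Rat.cast_one, mul_one, fourierChar_eq_one_iff] at h1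
    have hz : ∀ n : ℕ+, z.1 n = (k : ZMod n) := by
      intro n
      have hn := htriv (1 / n)
      rw [ratChar_eq_val_of_dvd _ _ (n := n) (by simp), ← Int.cast_natCast,
        fourierChar_eq_one_iff] at hn
      obtain ⟨t, ht⟩ := hn
      rw [← ZMod.natCast_zmod_val (z.1 n), ← Int.cast_natCast,
        ZMod.intCast_eq_intCast_iff_dvd_sub]
      refine ⟨t, ?_⟩
      have hn0 : (n : ℝ) ≠ 0 := by positivity
      push_cast at ht
      field_simp at ht
      exact_mod_cast ht
    exact ⟨k, Prod.ext rfl (Subtype.ext (funext fun n => (hz n).symm))⟩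
  · rintro _ ⟨k, rfl⟩
    refine AddMonoidHom.ext fun q => ?_
    rw [dualMap_apply, ratChar_eq_of_dvd _ q (n := q.pnatDen) (a := k) (by simp) rfl, diagZ_apply,
      sub_self, zero_mul, AddChar.map_zero_eq_one, ofMul_one, AddMonoidHom.zero_apply]

section Surjective

variable {φ : ℚ →+ Additive Circle} {x : ℕ+ → ℝ}

theorem toMul_apply_intCast_div (hx : ∀ n : ℕ+, 𝐞 (x n) = (φ (1 / n)).toMul) (k : ℤ)
    (n : ℕ+) : (φ (k / n)).toMul = 𝐞 (k * x n) := by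
  rw [fourierChar_intCast_mul, hx, ← toMul_zsmul, ← map_zsmul, zsmul_eq_mul, mul_one_div]

theorem exists_sub_mul_eq_intCast (hx : ∀ n : ℕ+, 𝐞 (x n) = (φ (1 / n)).toMul)
    {m n : ℕ+} {c : ℕ} (h : (n : ℕ) = m * c) : ∃ s : ℤ, x m - c * x n = s := by
  rw [← fourierChar_eq_fourierChar_iff, ← Int.cast_natCast c, ← toMul_apply_intCast_div hx,
    hx]
  have hm : (m : ℚ) ≠ 0 := by positivity
  have hn : (n : ℚ) ≠ 0 := by positivity
  congr 2
  rw [div_eq_div_iff hm hn]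
  push_cast [h]
  ring

end Surjective

theorem dualMap_surjective : Function.Surjective dualMap := by
  intro φ
  choose x hx using fun n : ℕ+ => fourierChar_surjective (φ (1 / n)).toMul
  choose w hw using fun n : ℕ+ =>
    exists_sub_mul_eq_intCast hx (m := 1) (n := n) (c := n) (by simp)
  have hmem : (fun n : ℕ+ => (w n : ZMod n)) ∈ ZHat := by
    refine ZHat.mem_of_forall_dvd_sub w fun m n ⟨c, hc⟩ => ?_
    obtain ⟨s, hs⟩ := exists_sub_mul_eq_intCast hx hc
    have hn := hw n
    rw [hc] at hn
    refine ⟨-s, Int.cast_injective (α := ℝ) ?_⟩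
    push_cast at hn ⊢
    linear_combination hn - hw m - (m : ℝ) * hs
  refine ⟨(x 1, ⟨_, hmem⟩), AddMonoidHom.ext fun q => ?_⟩
  set d := q.pnatDen
  have hφq : (φ q).toMul = 𝐞 (q.num * x d) := by
    rw [← toMul_apply_intCast_div hx, Rat.coe_pnatDen, Rat.num_div_den]
  have hd : (d : ℝ) * q = q.num := by
    rw [Rat.coe_pnatDen, Rat.cast_def, mul_div_cancel₀ _ (by positivity)]
  rw [dualMap_apply, ratChar_eq_of_dvd _ q (n := d) (by rw [Rat.coe_pnatDen]) rfl,
    ← ofMul_toMul (φ q), hφq, ← hw d, ← hd]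
  congr 2
  ring

theorem continuous_dualMap : Continuous dualMap := by
  refine continuous_induced_rng.2 (continuous_pi fun q => ?_)
  have hcoord : Continuous fun p : ℝ × ZHat => p.2.1 q.pnatDen :=
    (continuous_apply _).comp (continuous_subtype_val.comp continuous_snd)
  have hval : Continuous fun p : ℝ × ZHat => ((p.2.1 q.pnatDen).val : ℝ) :=
    (continuous_of_discreteTopology (f := fun a : ZMod q.pnatDen => (a.val : ℝ))).comp hcoord
  exact continuous_ofMul.comp (continuous_fourierChar.comp
    ((continuous_fst.sub hval).mul continuous_const))

instance : CompactSpace Y := by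
  have hsurj : Set.SurjOn (QuotientAddGroup.mk (s := diagZ.range))
      (Set.Icc (0 : ℝ) 1 ×ˢ Set.univ) Set.univ := by
    rintro ⟨r, z⟩ -
    refine ⟨(Int.fract r, z - ⌊r⌋), ⟨⟨Int.fract_nonneg r, (Int.fract_lt_one r).le⟩, trivial⟩,
      QuotientAddGroup.eq.2 ⟨⌊r⌋, ?_⟩⟩
    rw [diagZ_apply, neg_add_eq_sub, Prod.mk_sub_mk, sub_sub_cancel, Int.self_sub_fract]
  exact ⟨hsurj.image_eq_of_mapsTo (Set.mapsTo_univ _ _) ▸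
    (isCompact_Icc.prod isCompact_univ).image continuous_quotient_mk'⟩

instance : T2Space (ℚ →+ Additive Circle) :=
  Topology.IsEmbedding.t2Space ⟨⟨rfl⟩, DFunLike.coe_injective⟩

noncomputable def gamma : Y →+ (ℚ →+ Additive Circle) :=
  QuotientAddGroup.lift diagZ.range dualMap ker_dualMap.ge

theorem gamma_bijective : Function.Bijective gamma := by
  refine ⟨(injective_iff_map_eq_zero _).2 fun y hy => ?_, fun φ => ?_⟩
  · induction y using QuotientAddGroup.induction_on with
    | H p => exact (QuotientAddGroup.eq_zero_iff p).2 (ker_dualMap ▸ hy)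
  · obtain ⟨p, rfl⟩ := dualMap_surjective φ
    exact ⟨QuotientAddGroup.mk p, rfl⟩

theorem continuous_gamma : Continuous gamma :=
  continuous_quot_lift _ continuous_dualMap

/-- The Pontryagin dual of the discrete group `ℚ` is isomorphic as
a topological group to `(ℝ × Ẑ)/ℤ`, via the map `γ` sending the class of
`(r, z)` to the character `m/n ↦ exp(2πi (r − z(n)) · (m/n))`. -/
theorem dual_Q_iso_R_times_ZHat_mod_Z :
    ∃ e : Y ≃+ (ℚ →+ Additive Circle),
      Continuous e ∧ Continuous e.symm ∧
      ∀ (r : ℝ) (z : ZHat) (m : ℤ) (n : ℕ+),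
        e (QuotientAddGroup.mk (r, z) : Y) ((m : ℚ) / (n : ℚ)) =
          Additive.ofMul (Circle.exp
            (2 * π * ((r - ((z.1 n).val : ℝ)) * ((m : ℝ) / (n : ℝ))))) := by
  let e := AddEquiv.ofBijective gamma gamma_bijective
  refine ⟨e, continuous_gamma,
    (continuous_gamma.homeoOfEquivCompactToT2 (f := e.toEquiv)).symm.continuous,
    fun r z m n => ?_⟩
  have hden : ((m : ℚ) / n).den ∣ n := by
    exact_mod_cast Rat.divInt_eq_div m n ▸ Rat.den_dvd m n
  change dualMap (r, z) _ = _
  rw [dualMap_apply, ratChar_eq_val_of_dvd _ _ hden, fourierChar_apply']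
  push_cast
  rfl
end

section
/- The Pontryagin dual of ℚ/ℤ is isomorphic as a topological group to Ẑ = ∏_p ℤ_p, via the map sending z ∈ Ẑ to the character [m/n] ↦ exp(2πi · z(n) · m/n). -/
open scoped Real

/-- The discrete group `ℚ/ℤ`. -/
def QModZ : Type := ℚ ⧸ (Int.castAddHom ℚ).range

instance : AddCommGroup QModZ := inferInstanceAs (AddCommGroup (ℚ ⧸ (Int.castAddHom ℚ).range))

/-- The Pontryagin dual of `ℚ/ℤ`: since `ℚ/ℤ` is discrete, it consists of all
group homomorphisms `ℚ/ℤ → 𝕋`, with the topology of pointwise convergence. -/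
noncomputable instance : TopologicalSpace (QModZ →+ Additive Circle) :=
  TopologicalSpace.induced (fun φ => (φ : QModZ → Additive Circle)) inferInstance

/-!
`Ẑ` acts on `ℚ/ℤ` by `z · [q] = [z(n) q]` for any `n` with `nq ∈ ℤ`; composing with the embedding
`ℚ/ℤ ↪ 𝕋`, `[q] ↦ exp(2πiq)`, gives the map `Ẑ → Hom(ℚ/ℤ, 𝕋)`. It is injective because `z(n)` can
be read off from the value at `[1/n]`. It is surjective because a character sends `[1/n]` to an
`n`-th root of unity `exp(2πi k_n / n)`, and `(n/d) · [1/n] = [1/d]` forces `k_n ≡ k_d mod d`, so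
`(k_n)` is a point of `Ẑ`. The map is continuous since the value at `[q]` depends only on
`z(den q)`, and it is a homeomorphism because `Ẑ`, closed in `∏ ℤ/nℤ`, is compact and the dual
is Hausdorff.
-/

namespace QModZ

def mk : ℚ →+ QModZ := QuotientAddGroup.mk' _

lemma mk_surjective : Function.Surjective mk := QuotientAddGroup.mk'_surjective _

lemma mk_eq_zero_iff {q : ℚ} : mk q = 0 ↔ ∃ k : ℤ, (k : ℚ) = q :=
  QuotientAddGroup.eq_zero_iff q

lemma mk_intCast (k : ℤ) : mk k = 0 := mk_eq_zero_iff.2 ⟨k, rfl⟩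

lemma mk_intCast_div_eq_iff {a b : ℤ} {n : ℕ} (hn : n ≠ 0) :
    mk (a / n) = mk (b / n) ↔ (a : ZMod n) = b := by
  have hn' : (n : ℚ) ≠ 0 := by exact_mod_cast hn
  rw [eq_comm, ← sub_eq_zero, ← map_sub, mk_eq_zero_iff, ZMod.intCast_eq_intCast_iff_dvd_sub]
  refine exists_congr fun k => ?_
  rw [← sub_div, eq_div_iff hn', eq_comm]
  norm_cast
  rw [mul_comm]

lemma natCast_nsmul_mk_div (q : ℚ) {c : ℕ} (hc : c ≠ 0) (d : ℕ) :
    c • mk (q / (d * c)) = mk (q / d) := by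
  rw [← map_nsmul, nsmul_eq_mul, ← mul_div_assoc, mul_comm (d : ℚ),
    mul_div_mul_left _ _ (by exact_mod_cast hc)]

lemma mk_natCast_mul_eq_of_modEq {a b : ℕ} {q : ℚ} (h : a ≡ b [MOD q.den]) :
    mk (a * q) = mk (b * q) := by
  obtain ⟨k, hk⟩ := Nat.modEq_iff_dvd.1 h
  rw [eq_comm, ← sub_eq_zero, ← map_sub, mk_eq_zero_iff]
  refine ⟨k * q.num, ?_⟩
  have hk' : (b : ℚ) - a = q.den * k := by exact_mod_cast hk
  rw [Int.cast_mul, ← Rat.mul_den_eq_num]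
  linear_combination (-q) * hk'

lemma hom_ext {A : Type*} [AddGroup A] {f g : QModZ →+ A}
    (h : ∀ n : ℕ+, f (mk (1 / n)) = g (mk (1 / n))) : f = g := by
  ext x
  obtain ⟨q, rfl⟩ := mk_surjective x
  have hq : mk q = q.num • mk (1 / q.pnatDen) := by
    rw [← map_zsmul, zsmul_eq_mul, mul_one_div, Rat.coe_pnatDen, Rat.num_div_den]
  rw [hq, map_zsmul, map_zsmul, h]

noncomputable def toCircle : QModZ →+ Additive Circle :=
  QuotientAddGroup.lift _
    ((Circle.expHom.comp (AddMonoidHom.mulLeft (2 * π))).comp (Rat.castHom ℝ).toAddMonoidHom)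
    (by rintro _ ⟨k, rfl⟩; simpa using Circle.exp_two_pi_mul_int k)

lemma toCircle_mk (q : ℚ) : toCircle (mk q) = .ofMul (Circle.exp (2 * π * q)) := rfl

lemma toCircle_injective : Function.Injective toCircle := by
  refine (injective_iff_map_eq_zero _).2 fun x hx => ?_
  obtain ⟨q, rfl⟩ := mk_surjective x
  obtain ⟨k, hk⟩ := Circle.exp_eq_one.1 (congrArg Additive.toMul hx)
  have hq : (k : ℝ) = q := by
    change 2 * π * (q : ℝ) = _ at hk
    nlinarith [Real.pi_pos]
  exact mk_eq_zero_iff.2 ⟨k, by exact_mod_cast hq⟩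

lemma exists_toCircle_eq_of_nsmul_eq_zero {n : ℕ} (hn : n ≠ 0) {x : Additive Circle}
    (hx : n • x = 0) : ∃ k : ℤ, toCircle (mk (k / n)) = x := by
  have hc : Circle.exp (n * Complex.arg x.toMul) = 1 := by
    rw [Circle.exp_natCast_mul, Circle.exp_arg]
    exact congrArg Additive.toMul hx
  obtain ⟨k, hk⟩ := Circle.exp_eq_one.1 hc
  refine ⟨k, ?_⟩
  rw [toCircle_mk, ← ofMul_toMul x, ← Circle.exp_arg x.toMul]
  have hn' : (n : ℝ) ≠ 0 := by exact_mod_cast hn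
  congr 2
  push_cast
  field_simp
  linarith

end QModZ

instance : T2Space (QModZ →+ Additive Circle) :=
  Topology.IsEmbedding.t2Space
    (f := fun φ : QModZ →+ Additive Circle => (φ : QModZ → Additive Circle))
    ⟨⟨rfl⟩, DFunLike.coe_injective⟩

namespace ZHat

open QModZ

lemma val_modEq (z : ZHat) {d n : ℕ+} (h : (d : ℕ) ∣ n) :
    (z.1 n).val ≡ (z.1 d).val [MOD d] := by
  rw [← ZMod.natCast_eq_natCast_iff, ZMod.natCast_val, ZMod.natCast_zmod_val]
  exact z.2 d n h

noncomputable def mulRat (z : ZHat) (q : ℚ) : QModZ := mk ((z.1 q.pnatDen).val * q)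

lemma mulRat_eq (z : ZHat) {q : ℚ} {n : ℕ+} (h : q.den ∣ n) :
    mulRat z q = mk ((z.1 n).val * q) :=
  (mk_natCast_mul_eq_of_modEq (val_modEq z (d := q.pnatDen) h)).symm

lemma mulRat_add (z : ZHat) (q r : ℚ) : mulRat z (q + r) = mulRat z q + mulRat z r := by
  let n := q.pnatDen * r.pnatDen
  rw [mulRat_eq z (n := n) (Rat.add_den_dvd q r), mulRat_eq z (n := n) (dvd_mul_right _ _),
    mulRat_eq z (n := n) (dvd_mul_left _ _), mul_add, map_add]

lemma mulRat_intCast (z : ZHat) (k : ℤ) : mulRat z k = 0 := by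
  rw [mulRat]
  exact_mod_cast mk_intCast ((z.1 (k : ℚ).pnatDen).val * k)

noncomputable def mulQModZ (z : ZHat) : QModZ →+ QModZ :=
  QuotientAddGroup.lift _ (AddMonoidHom.mk' (mulRat z) (mulRat_add z))
    (by rintro _ ⟨k, rfl⟩; exact mulRat_intCast z k)

lemma mulQModZ_mk (z : ZHat) {q : ℚ} {n : ℕ+} (h : q.den ∣ n) :
    mulQModZ z (mk q) = mk ((z.1 n).val * q) :=
  mulRat_eq z h

lemma mulQModZ_add (z w : ZHat) : mulQModZ (z + w) = mulQModZ z + mulQModZ w := by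
  ext x
  obtain ⟨q, rfl⟩ := mk_surjective x
  have hval : (z.1 q.pnatDen + w.1 q.pnatDen).val ≡ (z.1 q.pnatDen).val + (w.1 q.pnatDen).val
      [MOD q.den] := by
    rw [ZMod.val_add]
    exact Nat.mod_modEq _ _
  have hd : q.den ∣ q.pnatDen := dvd_rfl
  rw [AddMonoidHom.add_apply, mulQModZ_mk _ hd, mulQModZ_mk _ hd, mulQModZ_mk _ hd,
    ← map_add, ← add_mul]
  exact_mod_cast mk_natCast_mul_eq_of_modEq hval

lemma mulQModZ_mk_one_div (z : ZHat) (n : ℕ+) :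
    mulQModZ z (mk (1 / n)) = mk (((z.1 n).val : ℤ) / n) := by
  rw [mulQModZ_mk z (n := n) (by simp), mul_one_div, Int.cast_natCast]

noncomputable def toDual : ZHat →+ (QModZ →+ Additive Circle) :=
  AddMonoidHom.mk' (fun z => toCircle.comp (mulQModZ z))
    (fun z w => by rw [mulQModZ_add, AddMonoidHom.comp_add])

lemma toDual_apply (z : ZHat) (x : QModZ) : toDual z x = toCircle (mulQModZ z x) := rfl

lemma toDual_injective : Function.Injective toDual := by
  refine (injective_iff_map_eq_zero _).2 fun z hz => Subtype.ext <| funext fun n => ?_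
  have h := DFunLike.congr_fun hz (mk (1 / n))
  rw [toDual_apply, AddMonoidHom.zero_apply, ← map_zero toCircle,
    toCircle_injective.eq_iff, mulQModZ_mk_one_div, ← map_zero mk, ← zero_div (n : ℚ),
    ← Int.cast_zero, mk_intCast_div_eq_iff n.ne_zero] at h
  simpa using h

lemma toDual_surjective : Function.Surjective toDual := by
  intro χ
  have htors (n : ℕ+) : (n : ℕ) • χ (mk (1 / n)) = 0 := by
    have h := natCast_nsmul_mk_div 1 n.ne_zero 1
    rw [Nat.cast_one, one_mul, div_one] at h
    rw [← map_nsmul, h, ← Int.cast_one, mk_intCast, map_zero]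
  choose k hk using fun n : ℕ+ => exists_toCircle_eq_of_nsmul_eq_zero n.ne_zero (htors n)
  have hcompat (d n : ℕ+) (h : (d : ℕ) ∣ n) :
      ZMod.castHom h (ZMod d) (k n : ZMod n) = (k d : ZMod d) := by
    rw [map_intCast, ← mk_intCast_div_eq_iff d.ne_zero, ← toCircle_injective.eq_iff]
    obtain ⟨c, hc⟩ := h
    have hc0 : c ≠ 0 := by rintro rfl; exact n.ne_zero hc
    have hn : ((n : ℕ) : ℚ) = d * c := by exact_mod_cast hc
    calc toCircle (mk (k n / d)) = c • toCircle (mk (k n / n)) := by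
          rw [hn, ← map_nsmul, natCast_nsmul_mk_div _ hc0]
      _ = χ (c • mk (1 / n)) := by rw [hk, map_nsmul]
      _ = toCircle (mk (k d / d)) := by rw [hn, natCast_nsmul_mk_div _ hc0, hk]
  refine ⟨⟨fun n => (k n : ZMod n), hcompat⟩, hom_ext fun n => ?_⟩
  rw [toDual_apply, mulQModZ_mk_one_div, ← hk n, toCircle_injective.eq_iff,
    mk_intCast_div_eq_iff n.ne_zero, Int.cast_natCast, ZMod.natCast_zmod_val]

lemma isClosed : IsClosed (ZHat : Set (Π n : ℕ+, ZMod n)) := by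
  simp only [ZHat, Subring.coe_set_mk, Subsemiring.coe_set_mk, Submonoid.coe_set_mk,
    Subsemigroup.coe_set_mk, Set.ofPred_forall]
  exact isClosed_iInter fun m => isClosed_iInter fun n => isClosed_iInter fun h =>
    isClosed_eq (continuous_of_discreteTopology.comp (continuous_apply n)) (continuous_apply m)

instance inst_s6 : CompactSpace ZHat := isCompact_iff_compactSpace.mp isClosed.isCompact

lemma continuous_toDual : Continuous toDual := by
  refine continuous_induced_rng.2 (continuous_pi fun x => ?_)
  obtain ⟨q, rfl⟩ := mk_surjective x
  have h : (fun z : ZHat => toDual z (mk q)) =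
      (fun a : ZMod q.pnatDen => toCircle (mk (a.val * q))) ∘ fun z => z.1 q.pnatDen :=
    funext fun z => congrArg toCircle (mulQModZ_mk z (n := q.pnatDen) dvd_rfl)
  exact h ▸ continuous_of_discreteTopology.comp ((continuous_apply _).comp continuous_subtype_val)

lemma toDual_mk_div (z : ZHat) (m : ℤ) (n : ℕ+) :
    toDual z (mk (m / n)) =
      Additive.ofMul (Circle.exp (2 * π * (((z.1 n).val : ℝ) * ((m : ℝ) / (n : ℝ))))) := by
  have h : ((m : ℚ) / n).den ∣ n := by
    have := Rat.den_dvd m n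
    rw [Rat.divInt_eq_div] at this
    exact_mod_cast this
  rw [toDual_apply, mulQModZ_mk z h, toCircle_mk]
  push_cast
  rfl

end ZHat

/-- The Pontryagin dual of `ℚ/ℤ` is isomorphic as a topological
group to `Ẑ`, via the map sending `z ∈ Ẑ` to the character
`[m/n] ↦ exp(2πi · z(n) · m/n)`. -/
theorem dual_QModZ_iso_ZHat :
    ∃ e : ZHat ≃+ (QModZ →+ Additive Circle),
      Continuous e ∧ Continuous e.symm ∧
      ∀ (z : ZHat) (m : ℤ) (n : ℕ+),
        e z (QuotientAddGroup.mk ((m : ℚ) / (n : ℚ)) : QModZ) =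
          Additive.ofMul (Circle.exp
            (2 * π * (((z.1 n).val : ℝ) * ((m : ℝ) / (n : ℝ))))) := by
  let e := AddEquiv.ofBijective ZHat.toDual ⟨ZHat.toDual_injective, ZHat.toDual_surjective⟩
  refine ⟨e, ZHat.continuous_toDual, ?_, ZHat.toDual_mk_div⟩
  exact (ZHat.continuous_toDual.homeoOfEquivCompactToT2 (f := e.toEquiv)).symm.continuous
end

section
/- Let φ be an automorphism of a free abelian group A of finite rank with φ² = id. Then A admits a ℤ-basis with respect to which the matrix of φ is block upper triangular with diagonal entries ±1; moreover the quotient A/im(id − φ) is isomorphic to ℤ^a ⊕ (ℤ/2ℤ)^b for some nonnegative integers a, b. -/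
/-!
The fixed submodule `N = ker (φ - 1)` has torsion-free, hence free, quotient `A ⧸ N`, because
`A ⧸ N ≅ im (φ - 1) ⊆ A`. So `A ≅ N × A ⧸ N`, and since `φ` is the identity on `N` and `-1` on
`A ⧸ N` (as `φ a + a ∈ N`), a basis of `N` followed by lifts of a basis of `A ⧸ N` makes `φ`
upper triangular.

In `A ⧸ im (1 - φ)`, if `n • a = b - φ b` then `φ` negates `n • a`, so `n • (a + φ a) = 0`, hence
`φ a = -a` and `2 • a = a - φ a ≡ 0`. So the torsion subgroup is an `𝔽₂`-vector space, and it
splits off because the quotient by it is free.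
-/

open Module

theorem Submodule.exists_linearEquiv_prod_quotient {R M : Type*} [Ring R] [AddCommGroup M]
    [Module R M] (N : Submodule R M) [Projective R (M ⧸ N)] :
    ∃ e : M ≃ₗ[R] N × (M ⧸ N), ∀ x : N, e.symm (x, 0) = x := by
  obtain ⟨l, hl⟩ := N.mkQ.exists_rightInverse_of_surjective N.range_mkQ
  let e := (LinearMap.exact_subtype_mkQ N).splitSurjectiveEquiv N.injective_subtype ⟨l, hl⟩
  exact ⟨e.1, fun x => (LinearMap.congr_fun e.2.1 x).symm⟩

theorem LinearMap.free_quotient_ker {R M M' : Type*} [CommRing R] [IsDomain R]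
    [IsPrincipalIdealRing R] [AddCommGroup M] [Module R M] [Module.Finite R M] [AddCommGroup M']
    [Module R M'] [IsTorsionFree R M'] (f : M →ₗ[R] M') : Free R (M ⧸ ker f) :=
  have : Module.Finite R (range f) := .range f
  .of_equiv f.quotKerEquivRange.symm

section Triangular

variable {ι R M : Type*} [Fintype ι] [DecidableEq ι] [LinearOrder ι] [CommRing R]
  [AddCommGroup M] [Module R M]

theorem Module.Basis.toMatrix_apply_of_sub_smul_mem_span (b : Basis ι R M) (f : M →ₗ[R] M)
    (c : ι → R) (h : ∀ j, f (b j) - c j • b j ∈ Submodule.span R (b '' Set.Iio j)) {i j : ι}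
    (hji : j ≤ i) : LinearMap.toMatrix b b f i j = Finsupp.single j (c j) i := by
  have hzero : b.repr (f (b j) - c j • b j) i = 0 := by
    by_contra hne
    exact not_lt.mpr hji
      (b.repr_support_subset_of_mem_span _ (h j) (Finsupp.mem_support_iff.mpr hne))
  rw [LinearMap.toMatrix_apply, ← sub_add_cancel (f (b j)) (c j • b j), map_add,
    Finsupp.add_apply, hzero, zero_add, map_smul, b.repr_self, Finsupp.smul_single_one]

theorem Module.Basis.toMatrix_blockTriangular_of_sub_smul_mem_span (b : Basis ι R M)
    (f : M →ₗ[R] M) (c : ι → R)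
    (h : ∀ j, f (b j) - c j • b j ∈ Submodule.span R (b '' Set.Iio j)) :
    (LinearMap.toMatrix b b f).BlockTriangular id ∧ ∀ i, LinearMap.toMatrix b b f i i = c i := by
  refine ⟨fun i j (hji : j < i) => ?_, fun i => ?_⟩
  · rw [b.toMatrix_apply_of_sub_smul_mem_span f c h hji.le, Finsupp.single_eq_of_ne hji.ne']
  · rw [b.toMatrix_apply_of_sub_smul_mem_span f c h le_rfl, Finsupp.single_eq_same]

end Triangular

theorem Submodule.exists_basis_blockTriangular_of_smul_of_smul_quotient
    {R M : Type*} [CommRing R] [StrongRankCondition R] [AddCommGroup M] [Module R M]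
    (N : Submodule R M) [Free R N] [Module.Finite R N] [Free R (M ⧸ N)] [Module.Finite R (M ⧸ N)]
    (f : M →ₗ[R] M) (c d : R) (hN : ∀ x ∈ N, f x = c • x) (hQ : ∀ m, f m - d • m ∈ N) :
    ∃ (n : ℕ) (b : Basis (Fin n) R M), (LinearMap.toMatrix b b f).BlockTriangular id ∧
      ∀ i, LinearMap.toMatrix b b f i i = c ∨ LinearMap.toMatrix b b f i i = d := by
  obtain ⟨e, he⟩ := N.exists_linearEquiv_prod_quotient
  let bN := finBasis R N
  let b := ((bN.prod (finBasis R (M ⧸ N))).map e.symm).reindex finSumFinEquiv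
  have hb_castAdd : ∀ i, b (Fin.castAdd _ i) = bN i := fun i => by simp [b, he]
  have hN_le : ∀ k, N ≤ span R (b '' Set.Iio (Fin.natAdd _ k)) := by
    intro k x hx
    have hspan : x ∈ span R (N.subtype '' Set.range bN) := by
      rwa [← map_span, bN.span_eq, map_top, N.range_subtype]
    refine span_mono ?_ hspan
    rintro _ ⟨_, ⟨i, rfl⟩, rfl⟩
    refine ⟨Fin.castAdd _ i, ?_, hb_castAdd i⟩
    simp only [Set.mem_Iio, Fin.lt_def, Fin.val_castAdd, Fin.val_natAdd]
    omega
  have hflag : ∀ j, f (b j) - Fin.append (fun _ => c) (fun _ => d) j • b j ∈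
      span R (b '' Set.Iio j) := by
    refine Fin.addCases (fun i => ?_) (fun k => ?_)
    · simp [hb_castAdd, hN _ (bN i).2]
    · simpa using hN_le k (hQ _)
  obtain ⟨htri, hdiag⟩ := b.toMatrix_blockTriangular_of_sub_smul_mem_span f _ hflag
  exact ⟨_, b, htri, fun i => hdiag i ▸ Fin.addCases (by simp) (by simp) i⟩

theorem Module.End.exists_basis_blockTriangular_of_involutive {R M : Type*} [CommRing R]
    [IsDomain R] [IsPrincipalIdealRing R] [AddCommGroup M] [Module R M] [Free R M]
    [Module.Finite R M] (ψ : Module.End R M) (hψ : Function.Involutive ψ) :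
    ∃ (n : ℕ) (b : Basis (Fin n) R M), (LinearMap.toMatrix b b ψ).BlockTriangular id ∧
      ∀ i, LinearMap.toMatrix b b ψ i i = 1 ∨ LinearMap.toMatrix b b ψ i i = -1 := by
  let N := LinearMap.ker (ψ - 1)
  have : Free R N := free_of_finite_type_torsion_free'
  have : Free R (M ⧸ N) := (ψ - 1).free_quotient_ker
  refine N.exists_basis_blockTriangular_of_smul_of_smul_quotient ψ 1 (-1) (fun x hx => ?_)
    (fun m => ?_)
  · simpa [N, sub_eq_zero] using hx
  · simp [N, hψ m, add_comm]

theorem AddCommGroup.exists_addEquiv_pi_zmod_of_nsmul_eq_zero {G : Type*} [AddCommGroup G]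
    [Finite G] (p : ℕ) [Fact p.Prime] (hG : ∀ x : G, p • x = 0) :
    ∃ b : ℕ, Nonempty (G ≃+ (Fin b → ZMod p)) := by
  -- `have`, not `let`: unfolding `zmodModule` would expose the ring rather than the field
  -- structure of `ZMod p`, and `finBasis` would no longer find the instance.
  have : Module (ZMod p) G := AddCommGroup.zmodModule hG
  exact ⟨_, ⟨(finBasis (ZMod p) G).equivFun.toAddEquiv⟩⟩

theorem AddCommGroup.exists_addEquiv_pi_int_prod_pi_zmod_of_torsion_nsmul_eq_zero
    {G : Type*} [AddCommGroup G] [Module.Finite ℤ G] (p : ℕ) [Fact p.Prime]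
    (hG : ∀ x : G, IsOfFinAddOrder x → p • x = 0) :
    ∃ a b : ℕ, Nonempty (G ≃+ (Fin a → ℤ) × (Fin b → ZMod p)) := by
  let T := Submodule.torsion ℤ G
  obtain ⟨e, -⟩ := T.exists_linearEquiv_prod_quotient
  have : Finite T := Module.finite_of_fg_torsion T Submodule.torsion_isTorsion
  obtain ⟨b, ⟨eT⟩⟩ := exists_addEquiv_pi_zmod_of_nsmul_eq_zero p fun x : T =>
    Subtype.ext <| hG x <| (mem_torsion _).mp (Submodule.torsion_int (G := G) ▸ x.2)
  let eQ := (finBasis ℤ (G ⧸ T)).equivFun.toAddEquiv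
  exact ⟨_, b, ⟨e.toAddEquiv.trans ((eT.prodCongr eQ).trans AddEquiv.prodComm)⟩⟩

theorem AddMonoidHom.two_nsmul_eq_zero_of_isOfFinAddOrder_of_involutive {A : Type*}
    [AddCommGroup A] [IsAddTorsionFree A] (φ : A →+ A) (hφ : Function.Involutive φ)
    (x : A ⧸ (AddMonoidHom.id A - φ).range) (hx : IsOfFinAddOrder x) : 2 • x = 0 := by
  obtain ⟨a, rfl⟩ := QuotientAddGroup.mk_surjective x
  obtain ⟨n, hn, hna⟩ := isOfFinAddOrder_iff_nsmul_eq_zero.mp hx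
  obtain ⟨b, hb⟩ : n • a ∈ (AddMonoidHom.id A - φ).range :=
    (QuotientAddGroup.eq_zero_iff _).mp (by rwa [QuotientAddGroup.mk_nsmul])
  have hanti : φ (n • a) = -(n • a) := by
    simp only [← hb, sub_apply, id_apply, map_sub, hφ _, neg_sub]
  have hfix : a + φ a = 0 :=
    nsmul_right_injective hn.ne' <| by simp only [smul_add, ← map_nsmul, hanti, add_neg_cancel,
      smul_zero]
  rw [← QuotientAddGroup.mk_nsmul, QuotientAddGroup.eq_zero_iff]
  exact ⟨a, by rw [sub_apply, id_apply, two_nsmul, eq_neg_of_add_eq_zero_right hfix,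
    sub_neg_eq_add]⟩

/-- If `φ` is an automorphism of a finitely generated free abelian
group `A` with `φ² = id`, then `A` has a ℤ-basis in which the matrix of `φ` is
(block) upper triangular with diagonal entries `±1`, and moreover
`A / im(id − φ) ≅ ℤ^a ⊕ (ℤ/2ℤ)^b` for some `a b : ℕ`. -/
theorem involution_upper_triangular_basis_and_coinvariants
    (A : Type*) [AddCommGroup A] [Module.Free ℤ A] [Module.Finite ℤ A]
    (φ : A ≃+ A) (hφ : ∀ a, φ (φ a) = a) :
    (∃ (n : ℕ) (bas : Module.Basis (Fin n) ℤ A),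
      (∀ i j : Fin n, j < i →
        LinearMap.toMatrix bas bas (φ.toAddMonoidHom.toIntLinearMap) i j = 0) ∧
      (∀ i : Fin n,
        LinearMap.toMatrix bas bas (φ.toAddMonoidHom.toIntLinearMap) i i = 1 ∨
        LinearMap.toMatrix bas bas (φ.toAddMonoidHom.toIntLinearMap) i i = -1)) ∧
    (∃ a b : ℕ, Nonempty
      ((A ⧸ (AddMonoidHom.id A - φ.toAddMonoidHom).range) ≃+
        ((Fin a → ℤ) × (Fin b → ZMod 2)))) := by
  constructor
  · obtain ⟨n, b, htri, hdiag⟩ :=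
      Module.End.exists_basis_blockTriangular_of_involutive φ.toAddMonoidHom.toIntLinearMap hφ
    exact ⟨n, b, fun _ _ hji => htri hji, hdiag⟩
  · have : IsAddTorsionFree A := .of_isTorsionFree ℤ A
    let H := (AddMonoidHom.id A - φ.toAddMonoidHom).range
    have : Module.Finite ℤ (A ⧸ H) :=
      .of_surjective (QuotientAddGroup.mk' H).toIntLinearMap (QuotientAddGroup.mk'_surjective H)
    exact AddCommGroup.exists_addEquiv_pi_int_prod_pi_zmod_of_torsion_nsmul_eq_zero 2
      (φ.toAddMonoidHom.two_nsmul_eq_zero_of_isOfFinAddOrder_of_involutive hφ)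
end

section
/- Let K be a number field in which infinitely many rational primes are unramified (which always holds). Then, given that the group of roots of unity μ of K is finite, there exists a rational prime power product p ∈ ℤ_{>0} lying in any fixed complement Γ of μ in K* (i.e. K* = μ × Γ) that can be extended to a ℤ-basis of the free abelian group Γ. -/
/-!
As `μ` is finite, `Γ` has finite index `N` in `Kˣ`, so by pigeonhole two distinct primes `q ≠ r`
not dividing the discriminant have the same class modulo `Γ`; then `u = q r^(N-1) = (q/r) r^N`
lies in `Γ`. A prime `P` of `𝓞 K` above the unramified prime `q` has `v_P(q) = 1` and
`v_P(r) = 0`, so `v_P(u) = 1` and `u` is not a proper power in `Γ`. Such a primitive element of a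
free `ℤ`-module extends to a basis: it lives on finitely many coordinates of a given basis, and
on these the Smith normal form of `ℤ u` does the job.
-/

open Module Submodule NumberField IsDedekindDomain WithZero

section PrimitiveElement

variable {R M : Type*} [CommRing R] [IsDomain R] [IsPrincipalIdealRing R]
  [AddCommGroup M] [Module R M]

theorem Module.Basis.exists_basis_apply_eq_of_finite {ι : Type*} [Finite ι] (b : Basis ι R M)
    {u : M} (hu : ∀ (k : R) (x : M), k • x = u → IsUnit k) :
    ∃ (c : Basis ι R M) (i : ι), c i = u := by
  classical
  have := Module.Free.of_basis b
  have hu0 : u ≠ 0 := fun h => not_isUnit_zero (hu 0 0 (by rw [zero_smul, h]))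
  obtain ⟨n, bM, bN, f, a, snf⟩ := (span R {u}).smithNormalForm b
  have hn : n = 1 := by
    have h := finrank_span_set_eq_card (R := R) (LinearIndepOn.singleton (v := id) hu0)
    rwa [Set.toFinset_singleton, Finset.card_singleton, finrank_eq_card_basis bN,
      Fintype.card_fin] at h
  subst hn
  obtain ⟨d, hd⟩ : ∃ d : R, d • bN 0 = ⟨u, mem_span_singleton_self u⟩ :=
    ⟨bN.repr _ 0, by simpa [Fin.sum_univ_one] using bN.sum_repr ⟨u, mem_span_singleton_self u⟩⟩
  have hdu : (d * a 0) • bM (f 0) = u := by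
    rw [mul_smul, ← snf, ← Submodule.coe_smul, hd]
  have hunit := hu _ _ hdu
  refine ⟨bM.unitsSMul (Function.update 1 (f 0) hunit.unit), f 0, ?_⟩
  rw [Basis.unitsSMul_apply, Function.update_self, Units.smul_def, IsUnit.unit_spec, hdu]

theorem Module.Basis.exists_basis_apply_eq {ι : Type*} (b : Basis ι R M)
    {u : M} (hu : ∀ (k : R) (x : M), k • x = u → IsUnit k) :
    ∃ (c : Basis ι R M) (i : ι), c i = u := by
  classical
  let s : Set ι := (b.repr u).support
  let E : M ≃ₗ[R] (s →₀ R) × (↥sᶜ →₀ R) := b.repr ≪≫ₗ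
    Finsupp.domLCongr (Equiv.sumCompl (· ∈ s)).symm ≪≫ₗ Finsupp.sumFinsuppLEquivProdFinsupp R
  have hE : E u = ((E u).1, 0) := by
    ext j
    · rfl
    · simpa [E] using Finsupp.notMem_support_iff.mp j.2
  have hprim (k : R) (x : s →₀ R) (hx : k • x = (E u).1) : IsUnit k :=
    hu k (E.symm (x, 0)) (by rw [← map_smul, Prod.smul_mk, smul_zero, hx, ← hE, E.symm_apply_apply])
  obtain ⟨c₁, i, hc₁⟩ := Finsupp.basisSingleOne.exists_basis_apply_eq_of_finite hprim
  refine ⟨((c₁.prod Finsupp.basisSingleOne).map E.symm).reindex (Equiv.sumCompl _), i, ?_⟩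
  rw [Basis.reindex_apply, Equiv.sumCompl_symm_apply_of_pos i.2, Basis.map_apply,
    LinearEquiv.symm_apply_eq, hE, Basis.prod_apply, Sum.elim_inl, Function.comp_apply,
    LinearMap.inl_apply, hc₁]

end PrimitiveElement

namespace Subgroup

variable {G : Type*} [CommGroup G] {H Γ : Subgroup G}

theorem finiteIndex_of_isCompl [Finite H] (h : IsCompl H Γ) : Γ.FiniteIndex := by
  rw [finiteIndex_iff, ← relIndex_top_right, ← h.sup_eq_top, relIndex_sup_right, relIndex]
  exact index_ne_zero_of_finite

theorem exists_ne_mul_pow_index_sub_one_mem [Γ.FiniteIndex] {α : Type*} [Infinite α]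
    (f : α → G) : ∃ a b, a ≠ b ∧ f a * f b ^ (Γ.index - 1) ∈ Γ := by
  obtain ⟨a, b, hab, hf⟩ := Finite.exists_ne_map_eq_of_infinite (fun a => (f a : G ⧸ Γ))
  refine ⟨a, b, hab, ?_⟩
  have hquot : f a / f b ∈ Γ := QuotientGroup.eq_iff_div_mem.mp hf
  obtain ⟨n, hn⟩ := Nat.exists_eq_add_one.mpr (FiniteIndex.index_ne_zero (H := Γ)).bot_lt
  have hpow : f b ^ (n + 1) ∈ Γ := hn ▸ pow_index_mem Γ (f b)
  rw [hn, Nat.add_sub_cancel]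
  convert mul_mem hquot hpow using 1
  rw [pow_succ', ← mul_assoc, div_mul_cancel]

end Subgroup

theorem Valuation.isUnit_of_map_zpow_eq_exp_neg_one {K : Type*} [DivisionRing K]
    (v : Valuation K ℤᵐ⁰) {y : K} (hy : y ≠ 0) {k : ℤ} (h : v (y ^ k) = exp (-1)) :
    IsUnit k := by
  rw [map_zpow₀, ← exp_log (v.ne_zero_iff.mpr hy), ← exp_zsmul, exp_inj, smul_eq_mul] at h
  exact IsUnit.of_mul_eq_one (-log (v y)) (by rw [mul_neg, h, neg_neg])

namespace NumberField

theorem torsion_units_subset_range (K : Type*) [Field K] :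
    (CommGroup.torsion Kˣ : Set Kˣ) ⊆
      Set.range fun ζ : Units.torsion K => Units.map (algebraMap (𝓞 K) K : 𝓞 K →* K) ζ := by
  intro ζ hζ
  obtain ⟨n, hn, hζn⟩ := isOfFinOrder_iff_pow_eq_one.mp hζ
  have hζn' : (ζ : K) ^ n = 1 := by rw [← Units.val_pow_eq_pow_val, hζn, Units.val_one]
  let x : 𝓞 K := ⟨ζ, IsIntegral.of_pow hn (hζn' ▸ isIntegral_one)⟩
  have hx : x ^ n = 1 := RingOfIntegers.coe_injective (by rw [map_pow, map_one]; exact hζn')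
  refine ⟨⟨Units.ofPowEqOne x n hx hn.ne', ?_⟩, Units.ext rfl⟩
  exact isOfFinOrder_iff_pow_eq_one.mpr ⟨n, hn, Units.pow_ofPowEqOne hx hn.ne'⟩

instance finite_torsion_units (K : Type*) [Field K] [NumberField K] :
    Finite (CommGroup.torsion Kˣ) :=
  ((Set.finite_range _).subset (torsion_units_subset_range K)).to_subtype

theorem infinite_setOf_prime_not_dvd_discr (K : Type*) [Field K] [NumberField K] :
    {q : ℕ | q.Prime ∧ ¬ (q : ℤ) ∣ discr K}.Infinite :=
  (Nat.infinite_setOfPred_prime.sdiff (Set.finite_le_nat (discr K).natAbs)).mono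
    fun _ hq => ⟨hq.1, fun hd =>
      hq.2 (Nat.le_of_dvd (Int.natAbs_pos.mpr (discr_ne_zero K)) (Int.natCast_dvd.mp hd))⟩

theorem exists_valuation_algebraMap_eq_of_not_dvd_discr (K : Type*) [Field K] [NumberField K]
    (v : HeightOneSpectrum ℤ) {p : ℤ} (hp : Prime p) (hpv : p ∈ v.asIdeal)
    (hK : ¬ p ∣ discr K) :
    ∃ w : HeightOneSpectrum (𝓞 K), ∀ x : ℚ,
      w.valuation K (algebraMap ℚ K x) = v.valuation ℚ x := by
  have := v.isMaximal
  obtain ⟨P, hPmax, hPv⟩ := Ideal.exists_maximal_ideal_liesOver_of_isIntegral (S := 𝓞 K) v.asIdeal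
  let w : HeightOneSpectrum (𝓞 K) :=
    ⟨P, hPmax.isPrime, Ideal.ne_bot_of_liesOver_of_ne_bot v.ne_bot P⟩
  have : Algebra.IsUnramifiedAt ℤ P :=
    (not_dvd_discr_iff_forall_mem K (𝓞 K) hp).mp hK P hPmax.isPrime
      ((Ideal.mem_of_liesOver P v.asIdeal p).mp hpv)
  have he : v.asIdeal.ramificationIdx' P = 1 := by
    rw [Ideal.ramificationIdx'_eq_ramificationIdx _ _ v.ne_bot, Ideal.ramificationIdx_eq_one]
  refine ⟨w, fun x => ?_⟩
  rw [← HeightOneSpectrum.valuation_liesOver K v w x, he, pow_one]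

theorem exists_valuation_natCast_eq_exp_neg_one (K : Type*) [Field K] [NumberField K]
    {q : ℕ} (hq : q.Prime) (hK : ¬ (q : ℤ) ∣ discr K) :
    ∃ w : HeightOneSpectrum (𝓞 K), w.valuation K q = exp (-1) ∧
      ∀ r : ℕ, ¬ q ∣ r → w.valuation K r = 1 := by
  have hqZ : Prime (q : ℤ) := Nat.prime_iff_prime_int.mp hq
  let v : HeightOneSpectrum ℤ :=
    ⟨Ideal.span {(q : ℤ)}, (Ideal.span_singleton_prime hqZ.ne_zero).mpr hqZ,
      by simpa using hqZ.ne_zero⟩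
  obtain ⟨w, hw⟩ :=
    exists_valuation_algebraMap_eq_of_not_dvd_discr K v hqZ (Ideal.mem_span_singleton_self _) hK
  have hcast (n : ℕ) : (n : K) = algebraMap ℚ K (algebraMap ℤ ℚ n) := by simp
  refine ⟨w, ?_, fun r hr => ?_⟩
  · rw [hcast, hw, HeightOneSpectrum.valuation_of_algebraMap,
      HeightOneSpectrum.intValuation_singleton _ hqZ.ne_zero rfl]
  · rw [hcast, hw, HeightOneSpectrum.valuation_of_algebraMap,
      HeightOneSpectrum.intValuation_eq_one_iff, Ideal.mem_span_singleton]
    exact_mod_cast hr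

end NumberField

/-- Let `K` be a number field, `μ ⊆ Kˣ` its (finite) group of
roots of unity, and `Γ` a free abelian complement, so that `Kˣ = μ × Γ`.
Then there exists a positive integer `p` which, as an element of `Kˣ`, lies in
`Γ` and can be extended to a ℤ-basis of the free abelian group `Γ`. -/
theorem exists_positive_integer_basis_element
    (K : Type*) [Field K] [NumberField K]
    (Γ : Subgroup Kˣ)
    (hfree : Module.Free ℤ (Additive Γ))
    (hcompl : IsCompl (CommGroup.torsion Kˣ) Γ) :
    ∃ (p : ℕ) (_ : 0 < p) (u : Kˣ) (hu : u ∈ Γ),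
      (u : K) = (p : K) ∧
      ∃ (ι : Type) (bas : Module.Basis ι ℤ (Additive Γ)) (i : ι),
        bas i = Additive.ofMul (⟨u, hu⟩ : Γ) := by
  have := Subgroup.finiteIndex_of_isCompl hcompl
  have := (infinite_setOf_prime_not_dvd_discr K).to_subtype
  let toUnit (q : {q : ℕ | q.Prime ∧ ¬ (q : ℤ) ∣ discr K}) : Kˣ :=
    Units.mk0 (q : K) (Nat.cast_ne_zero.mpr q.2.1.ne_zero)
  obtain ⟨q, r, hqr, huΓ⟩ := Γ.exists_ne_mul_pow_index_sub_one_mem toUnit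
  set u := toUnit q * toUnit r ^ (Γ.index - 1)
  have hu : (u : K) = ((q * r ^ (Γ.index - 1) : ℕ) : K) := by simp [u, toUnit]
  have hndvd : ¬ (q : ℕ) ∣ r :=
    (Nat.prime_dvd_prime_iff_eq q.2.1 r.2.1).not.mpr (Subtype.coe_ne_coe.mpr hqr)
  obtain ⟨w, hwq, hwr⟩ := exists_valuation_natCast_eq_exp_neg_one K q.2.1 q.2.2
  have hwu : w.valuation K u = exp (-1) := by
    rw [hu, Nat.cast_mul, Nat.cast_pow, map_mul, map_pow, hwq, hwr r hndvd, one_pow, mul_one]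
  have hprim (k : ℤ) (x : Additive Γ) (hx : k • x = Additive.ofMul ⟨u, huΓ⟩) : IsUnit k := by
    refine (w.valuation K).isUnit_of_map_zpow_eq_exp_neg_one (x.toMul : Kˣ).ne_zero ?_
    rwa [← Units.val_zpow_eq_zpow_val, ← Subgroup.coe_zpow, ← toMul_zsmul, hx]
  have : Countable K := (Module.finBasis ℚ K).equivFun.injective.countable
  have : Countable (Additive Γ) :=
    (Units.val_injective.comp Subtype.val_injective :
      Function.Injective fun x : Γ => ((x : Kˣ) : K)).countable
  let b := Module.Free.chooseBasis ℤ (Additive Γ)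
  have : Countable (Module.Free.ChooseBasisIndex ℤ (Additive Γ)) := b.injective.countable
  obtain ⟨c, i, hc⟩ := (b.reindex (equivShrink.{0} _)).exists_basis_apply_eq hprim
  exact ⟨_, Nat.mul_pos q.2.1.pos (pow_pos r.2.1.pos _), u, huΓ, hu, _, c, i, hc⟩
end
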